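/- arXiv:2503.03096 — 3 statements merged into one kernel-verified Lean document; each statement's English description precedes it below -/
import Mathlib

section
/- Let X₁, X₂ be RN modules over K with base (Ω,F,P) and T : X₁ → X₂ a linear operator. Then T is almost surely bounded (i.e., there exists η ∈ L⁰₊(F) with ‖Tz‖₂ ≤ η·‖z‖₁ for all z ∈ X₁) if and only if T is a continuous module homomorphism from X₁ to X₂ with respect to the (ε,λ)-topologies. -/
open MeasureTheory Filter Set
noncomputable section

/-- A random normed module (RN module) over ℝ with base `(Ω, F, P)`:
an `L⁰(F,ℝ)`-module `X` together with an `L⁰`-norm. The `L⁰(F,ℝ)`-scalar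
multiplication is bundled as the field `smul`. -/
structure RNModuleStr {Ω : Type*} [MeasurableSpace Ω] (P : Measure Ω)
    (X : Type*) [AddCommGroup X] where
  smul : (Ω →ₘ[P] ℝ) → X → X
  nrm : X → Ω →ₘ[P] ℝ
  one_smul' : ∀ x, smul 1 x = x
  mul_smul' : ∀ ξ η x, smul (ξ * η) x = smul ξ (smul η x)
  smul_add' : ∀ ξ x y, smul ξ (x + y) = smul ξ x + smul ξ y
  add_smul' : ∀ ξ η x, smul (ξ + η) x = smul ξ x + smul η x
  nrm_nonneg : ∀ x, 0 ≤ nrm x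
  nrm_smul : ∀ ξ x, nrm (smul ξ x) = |ξ| * nrm x
  nrm_add_le : ∀ x y, nrm (x + y) ≤ nrm x + nrm y
  nrm_eq_zero : ∀ x, nrm x = 0 → x = 0

namespace RNModuleStr

variable {Ω : Type*} [MeasurableSpace Ω] {P : Measure Ω} {X : Type*} [AddCommGroup X]

/-- Scalar multiplication by a real constant (viewed as a constant random variable). -/
def rsmul (M : RNModuleStr P X) (c : ℝ) (x : X) : X :=
  M.smul (AEEqFun.const Ω c) x

/-- Convergence in the `(ε,λ)`-topology of an RN module, i.e. convergence in
probability of the `L⁰`-norms of the differences, along an arbitrary filter. -/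
def TendstoRN (M : RNModuleStr P X) {ι : Type*} (f : ι → X) (l : Filter ι) (x : X) : Prop :=
  ∀ ε : ℝ, 0 < ε → Tendsto (fun i => P {ω : Ω | ε ≤ M.nrm (f i - x) ω}) l (nhds 0)

/-- Sequential continuity of a map between RN modules; in the metrizable
`(ε,λ)`-topology this is equivalent to continuity. -/
def RNContinuousMap {Y : Type*} [AddCommGroup Y] (M : RNModuleStr P X)
    (N : RNModuleStr P Y) (T : X → Y) : Prop :=
  ∀ (u : ℕ → X) (x : X), M.TendstoRN u atTop x → N.TendstoRN (fun n => T (u n)) atTop (T x)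

/-- `T : X → Y` is a module homomorphism of `L⁰`-modules. -/
def IsModuleHom {Y : Type*} [AddCommGroup Y] (M : RNModuleStr P X)
    (N : RNModuleStr P Y) (T : X → Y) : Prop :=
  (∀ x y : X, T (x + y) = T x + T y) ∧ ∀ (ξ : Ω →ₘ[P] ℝ) (x : X), T (M.smul ξ x) = N.smul ξ (T x)

/-- `T` is almost surely bounded: `‖Tz‖ ≤ η ‖z‖` for some `η ∈ L⁰₊`. -/
def ASBounded {Y : Type*} [AddCommGroup Y] (M : RNModuleStr P X)
    (N : RNModuleStr P Y) (T : X → Y) : Prop :=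
  ∃ η : Ω →ₘ[P] ℝ, 0 ≤ η ∧ ∀ x : X, N.nrm (T x) ≤ η * M.nrm x

/-- Riemann sum over the uniform partition of `[a,b]` into `n` pieces. -/
def rsum (M : RNModuleStr P X) (f : ℝ → X) (a b : ℝ) (n : ℕ) : X :=
  ∑ i ∈ Finset.range n, M.rsmul ((b - a) / n) (f (a + (b - a) * i / n))

/-- `y` is the Riemann integral `∫ₐᵇ f(u) du` in the complete RN module `X`
(limit in the `(ε,λ)`-topology of the uniform Riemann sums). -/
def IsIntegral (M : RNModuleStr P X) (f : ℝ → X) (a b : ℝ) (y : X) : Prop :=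
  M.TendstoRN (fun n => M.rsum f a b n) atTop y

/-- The family `{V(s) : s ≥ 0}` is locally a.s. bounded:
`⋁_{s∈[0,l]} ‖V(s)‖ ∈ L⁰₊(F)` for every `l > 0`. -/
def LocASBounded (M : RNModuleStr P X) (V : ℝ → X → X) : Prop :=
  ∀ l : ℝ, 0 < l → ∃ η : Ω →ₘ[P] ℝ, 0 ≤ η ∧
    ∀ s ∈ Icc (0:ℝ) l, ∀ x : X, M.nrm (V s x) ≤ η * M.nrm x

/-- `{V(s) : s ≥ 0}` is a `C`-semigroup on the RN module `X`. -/
structure IsCSemigroup (M : RNModuleStr P X) (V : ℝ → X → X) (C : X → X) : Prop where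
  C_hom : M.IsModuleHom M C
  C_bdd : ASBounded M M C
  C_inj : Function.Injective C
  V_hom : ∀ s : ℝ, 0 ≤ s → M.IsModuleHom M (V s)
  V_bdd : ∀ s : ℝ, 0 ≤ s → ASBounded M M (V s)
  strong_cont : ∀ (z : X) (t : ℝ), 0 ≤ t →
    M.TendstoRN (fun s => V s z) (nhdsWithin t (Ici 0)) (V t z)
  V_zero : V 0 = C
  C_V : ∀ s t : ℝ, 0 ≤ s → 0 ≤ t → ∀ z : X, C (V (s + t) z) = V s (V t z)

/-- `(A, DA)` is the generator of the `C`-semigroup `{V(s) : s ≥ 0}`: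
`DA = {z : lim_{s↓0} (V(s)z - Cz)/s exists and lies in R(C)}` and
`Az = C⁻¹ lim_{s↓0} (V(s)z - Cz)/s`. -/
structure IsGenerator (M : RNModuleStr P X) (V : ℝ → X → X) (C : X → X)
    (DA : Set X) (A : X → X) : Prop where
  mem_iff : ∀ z : X, z ∈ DA ↔ ∃ w : X,
    M.TendstoRN (fun s => M.rsmul s⁻¹ (V s z - C z)) (nhdsWithin 0 (Ioi 0)) (C w)
  spec : ∀ z ∈ DA,
    M.TendstoRN (fun s => M.rsmul s⁻¹ (V s z - C z)) (nhdsWithin 0 (Ioi 0)) (C (A z))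

/-- `{V(s) : s ≥ 0}` is a mild `C`-existence family for the module homomorphism
`A` with domain `DA`. -/
structure IsMildCExistenceFamily (M : RNModuleStr P X) (V : ℝ → X → X) (C : X → X)
    (DA : Set X) (A : X → X) : Prop where
  V_hom : ∀ s : ℝ, 0 ≤ s → M.IsModuleHom M (V s)
  locBdd : M.LocASBounded V
  strong_cont : ∀ (z : X) (t : ℝ), 0 ≤ t →
    M.TendstoRN (fun s => V s z) (nhdsWithin t (Ici 0)) (V t z)
  integral_mem : ∀ (z : X) (s : ℝ), 0 ≤ s → ∃ y : X,
    M.IsIntegral (fun u => V u z) 0 s y ∧ y ∈ DA ∧ A y = V s z - C z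

/-- `A` (with domain `DA`) is a closed module homomorphism: its graph is closed
in the `(ε,λ)`-topology. -/
def IsClosedOperator (M : RNModuleStr P X) (DA : Set X) (A : X → X) : Prop :=
  ∀ (u : ℕ → X) (z y : X), (∀ n, u n ∈ DA) →
    M.TendstoRN u atTop z → M.TendstoRN (fun n => A (u n)) atTop y →
    z ∈ DA ∧ A z = y

end RNModuleStr

open RNModuleStr

/-!
Bounded implies continuous because `‖T uₙ - T x‖ ≤ η ‖uₙ - x‖` and a single random variable `η`
is bounded in probability.

Conversely, let `T` be continuous. The family `{‖T z‖ : ‖z‖ ≤ 1}` is upward directed: glue two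
vectors along the set where the first image norm dominates, which `T` respects by
`L⁰`-linearity. It is bounded in probability: otherwise there are `‖zₖ‖ ≤ 1` with
`‖T zₖ‖ > k + 1` on sets of measure `> δ`, so `zₖ / (k + 1) → 0` while its image does not.
A directed family of random variables that is bounded in probability is bounded above in `L⁰`:
maximising `∫ sigmoid a` over the family yields a monotone sequence whose pointwise supremum
dominates every member almost surely, and boundedness in probability makes that supremum finite.
Finally, testing the resulting bound `η` on `(‖z‖ + ε)⁻¹ z` gives `‖T z‖ ≤ η (‖z‖ + ε)`; let
`ε → 0`.
-/

open scoped ENNReal Topology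

theorem DirectedOn.exists_monotone_seq_ge {α : Type*} [Preorder α] {S : Set α}
    (hS : DirectedOn (· ≤ ·) S) {x : ℕ → α} (hx : ∀ n, x n ∈ S) :
    ∃ g : ℕ → α, (∀ n, g n ∈ S) ∧ Monotone g ∧ ∀ n, x n ≤ g n := by
  choose next hnext_mem hle_next hx_le_next using
    fun (a : S) (n : ℕ) => hS a a.2 (x n) (hx n)
  let g : ℕ → S := fun n =>
    Nat.rec ⟨x 0, hx 0⟩ (fun n a => ⟨next a (n + 1), hnext_mem a (n + 1)⟩) n
  refine ⟨fun n => (g n).1, fun n => (g n).2, ?_, ?_⟩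
  · exact monotone_nat_of_le_succ fun n => hle_next (g n) (n + 1)
  rintro (_ | n)
  exacts [le_rfl, hx_le_next _ _]

namespace MeasureTheory.AEEqFun

variable {Ω : Type*} [MeasurableSpace Ω] {P : Measure Ω}

def indicatorOne (P : Measure Ω) {A : Set Ω} (hA : MeasurableSet A) : Ω →ₘ[P] ℝ :=
  mk (A.indicator 1) (measurable_one.indicator hA).aestronglyMeasurable

theorem coeFn_indicatorOne {A : Set Ω} (hA : MeasurableSet A) :
    ⇑(indicatorOne P hA) =ᵐ[P] A.indicator 1 :=
  coeFn_mk _ _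

theorem indicatorOne_mul_indicatorOne {A B : Set Ω} (hA : MeasurableSet A)
    (hB : MeasurableSet B) :
    indicatorOne P hA * indicatorOne P hB = indicatorOne P (hA.inter hB) := by
  simp only [indicatorOne, mk_mul_mk, Set.inter_indicator_one]

theorem indicatorOne_empty : indicatorOne P MeasurableSet.empty = 0 := by
  refine ext ((coeFn_indicatorOne _).trans ?_)
  rw [Set.indicator_empty]
  exact coeFn_zero.symm

def BddAboveInProbability (S : Set (Ω →ₘ[P] ℝ)) : Prop :=
  ∀ δ : ℝ≥0∞, 0 < δ → ∃ K : ℝ, ∀ a ∈ S, P {ω | K < a ω} ≤ δ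

theorem bddAboveInProbability_singleton [IsFiniteMeasure P] (a : Ω →ₘ[P] ℝ) :
    BddAboveInProbability {a} := by
  intro δ hδ
  have h_tendsto : Tendsto (fun n : ℕ => P {ω | (n : ℝ) < a ω}) atTop (𝓝 0) := by
    have h_meas (n : ℕ) : MeasurableSet {ω | (n : ℝ) < a ω} :=
      measurableSet_lt measurable_const a.stronglyMeasurable.measurable
    have h_anti : Antitone fun n : ℕ => {ω | (n : ℝ) < a ω} := fun m n hmn ω hω =>
      show (m : ℝ) < a ω from (Nat.cast_le.mpr hmn).trans_lt hω
    have h := tendsto_measure_iInter_atTop (μ := P) (fun n => (h_meas n).nullMeasurableSet) h_anti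
      ⟨0, measure_ne_top _ _⟩
    have h_empty : ⋂ n : ℕ, {ω | (n : ℝ) < a ω} = ∅ :=
      Set.eq_empty_of_forall_notMem fun ω hω =>
        (exists_nat_ge (a ω)).elim fun n hn => (Set.mem_iInter.mp hω n).not_ge hn
    rwa [h_empty, measure_empty] at h
  obtain ⟨n, hn⟩ := (ENNReal.tendsto_nhds_zero.mp h_tendsto δ hδ).exists
  exact ⟨n, fun b hb => hb ▸ hn⟩

theorem ae_monotone_coeFn {g : ℕ → Ω →ₘ[P] ℝ} (hg : Monotone g) :
    ∀ᵐ ω ∂P, Monotone fun n => g n ω := by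
  filter_upwards [ae_all_iff.mpr fun n => coeFn_le.mpr (hg (Nat.le_succ n))] with ω hω
  exact monotone_nat_of_le_succ hω

theorem ae_bddAbove_of_bddAboveInProbability {g : ℕ → Ω →ₘ[P] ℝ} (hg : Monotone g)
    (hprob : BddAboveInProbability (Set.range g)) :
    ∀ᵐ ω ∂P, BddAbove (Set.range fun n => g n ω) := by
  refine ae_iff.mpr (le_antisymm (ENNReal.le_of_forall_pos_le_add fun δ hδ _ => ?_) bot_le)
  obtain ⟨K, hK⟩ := hprob δ (by exact_mod_cast hδ)
  let above : ℕ → Set Ω := fun n => {ω | K < g n ω}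
  calc P {ω | ¬BddAbove (Set.range fun n => g n ω)}
      ≤ P (⋃ n, above n) := measure_mono fun ω hω => by
        obtain ⟨_, ⟨n, rfl⟩, hn⟩ := not_bddAbove_iff.mp hω K
        exact Set.mem_iUnion.mpr ⟨n, hn⟩
    _ = ⨆ n, P (Set.accumulate above n) := measure_iUnion_eq_iSup_accumulate
    _ ≤ δ := iSup_le fun n => by
        refine (measure_mono_ae ?_).trans (hK _ ⟨n, rfl⟩)
        filter_upwards [ae_monotone_coeFn hg] with ω hω hmem
        obtain ⟨m, hmn, hm⟩ := Set.mem_accumulate.mp hmem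
        exact hm.trans_le (hω hmn)
    _ = 0 + δ := (zero_add _).symm

theorem exists_forall_le_of_ae_bddAbove {g : ℕ → Ω →ₘ[P] ℝ}
    (hg : ∀ᵐ ω ∂P, BddAbove (Set.range fun n => g n ω)) : ∃ η : Ω →ₘ[P] ℝ, ∀ n, g n ≤ η := by
  have hsup : Measurable fun ω => ⨆ n, g n ω :=
    Measurable.iSup fun n => (g n).stronglyMeasurable.measurable
  refine ⟨mk _ hsup.aestronglyMeasurable, fun n => coeFn_le.mp ?_⟩
  filter_upwards [coeFn_mk _ hsup.aestronglyMeasurable, hg] with ω hη hω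
  rw [hη]
  exact le_ciSup hω n

theorem exists_monotone_seq_ae_le_of_directedOn [IsFiniteMeasure P] {S : Set (Ω →ₘ[P] ℝ)}
    (hne : S.Nonempty) (hS : DirectedOn (· ≤ ·) S) :
    ∃ g : ℕ → Ω →ₘ[P] ℝ, (∀ n, g n ∈ S) ∧ Monotone g ∧
      ∀ a ∈ S, ∀ᵐ ω ∂P, ∀ b, (∀ n, g n ω ≤ b) → a ω ≤ b := by
  let φ : ℝ → ℝ≥0∞ := fun t => ENNReal.ofReal (Real.sigmoid t)
  have hφ_mono : Monotone φ := fun _ _ h => ENNReal.ofReal_le_ofReal (Real.sigmoid_le h)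
  have hφ_meas : Measurable φ := ENNReal.measurable_ofReal.comp continuous_sigmoid.measurable
  have hφ_aemeas (a : Ω →ₘ[P] ℝ) : AEMeasurable (fun ω => φ (a ω)) P :=
    (hφ_meas.comp a.stronglyMeasurable.measurable).aemeasurable
  let J : (Ω →ₘ[P] ℝ) → ℝ≥0∞ := fun a => ∫⁻ ω, φ (a ω) ∂P
  have hJ_mono {a b : Ω →ₘ[P] ℝ} (hab : a ≤ b) : J a ≤ J b :=
    lintegral_mono_ae ((coeFn_le.mpr hab).mono fun ω h => hφ_mono h)
  obtain ⟨u, -, hu, hu_mem⟩ := exists_seq_tendsto_sSup (hne.image J) (OrderTop.bddAbove _)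
  choose x hxS hxJ using hu_mem
  obtain ⟨g, hgS, hg, hxg⟩ := hS.exists_monotone_seq_ge hxS
  have hJ_le_sSup (a) (ha : a ∈ S) : J a ≤ sSup (J '' S) := le_sSup ⟨a, ha, rfl⟩
  let G : Ω → ℝ≥0∞ := fun ω => ⨆ n, φ (g n ω)
  have hφg_mono : ∀ᵐ ω ∂P, Monotone fun n => φ (g n ω) :=
    (ae_monotone_coeFn hg).mono fun ω h => hφ_mono.comp h
  have hG : ∫⁻ ω, G ω ∂P = sSup (J '' S) := by
    rw [lintegral_iSup' (fun n => hφ_aemeas (g n)) hφg_mono]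
    refine le_antisymm (iSup_le fun n => hJ_le_sSup _ (hgS n)) (le_of_tendsto' hu fun n => ?_)
    exact (hxJ n).symm.le.trans ((hJ_mono (hxg n)).trans (le_iSup (fun n => J (g n)) n))
  have hG_ne_top : ∫⁻ ω, G ω ∂P ≠ ∞ := by
    refine ne_top_of_le_ne_top (measure_ne_top P Set.univ) ?_
    rw [← lintegral_one]
    exact MeasureTheory.lintegral_mono fun ω =>
      iSup_le fun n => ENNReal.ofReal_le_one.mpr (Real.sigmoid_le_one _)
  refine ⟨g, hgS, hg, fun a ha => ?_⟩
  have h_sup : ∫⁻ ω, φ (a ω) ⊔ G ω ∂P ≤ ∫⁻ ω, G ω ∂P := by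
    have h_mono : ∀ᵐ ω ∂P, Monotone fun n => φ (a ω) ⊔ φ (g n ω) :=
      hφg_mono.mono fun ω h n m hnm => sup_le_sup_left (h hnm) _
    simp_rw [G, sup_iSup]
    rw [lintegral_iSup' (fun n => (hφ_aemeas a).fun_sup (hφ_aemeas (g n))) h_mono, hG]
    refine iSup_le fun n => ?_
    obtain ⟨c, hcS, hac, hgc⟩ := hS a ha (g n) (hgS n)
    refine (lintegral_mono_ae ?_).trans (hJ_le_sSup c hcS)
    filter_upwards [coeFn_le.mpr hac, coeFn_le.mpr hgc] with ω h₁ h₂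
    exact sup_le (hφ_mono h₁) (hφ_mono h₂)
  filter_upwards [ae_eq_of_ae_le_of_lintegral_le (Eventually.of_forall fun ω => le_sup_right)
    hG_ne_top ((hφ_aemeas a).fun_sup (AEMeasurable.iSup fun n => hφ_aemeas (g n))) h_sup]
    with ω hω b hb
  have : φ (a ω) ≤ φ b := (le_sup_left.trans hω.symm.le).trans (iSup_le fun n => hφ_mono (hb n))
  exact Real.sigmoid_le_iff.mp ((ENNReal.ofReal_le_ofReal_iff (Real.sigmoid_nonneg b)).mp this)

theorem bddAbove_of_directedOn_of_bddAboveInProbability [IsFiniteMeasure P]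
    {S : Set (Ω →ₘ[P] ℝ)} (hS : DirectedOn (· ≤ ·) S) (hprob : BddAboveInProbability S) :
    BddAbove S := by
  rcases S.eq_empty_or_nonempty with rfl | hne
  · exact bddAbove_empty
  obtain ⟨g, hgS, hg, hg_ae⟩ := exists_monotone_seq_ae_le_of_directedOn hne hS
  have hprob_g : BddAboveInProbability (Set.range g) := fun δ hδ =>
    (hprob δ hδ).imp fun K hK => by rintro _ ⟨n, rfl⟩; exact hK _ (hgS n)
  obtain ⟨η, hη⟩ :=
    exists_forall_le_of_ae_bddAbove (ae_bddAbove_of_bddAboveInProbability hg hprob_g)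
  refine ⟨η, fun a ha => coeFn_le.mp ?_⟩
  filter_upwards [hg_ae a ha, ae_all_iff.mpr fun n => coeFn_le.mpr (hη n)] with ω h hgη
  exact h _ hgη

end MeasureTheory.AEEqFun

namespace RNModuleStr

open AEEqFun

section

variable {Ω : Type*} [MeasurableSpace Ω] {P : Measure Ω} {X : Type*} [AddCommGroup X]
  (M : RNModuleStr P X)

protected theorem zero_smul (x : X) : M.smul 0 x = 0 := by
  have h := M.add_smul' 0 0 x
  rwa [add_zero, left_eq_add] at h

theorem nrm_nonneg_apply (x : X) : ∀ᵐ ω ∂P, 0 ≤ M.nrm x ω := by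
  filter_upwards [coeFn_le.mpr (M.nrm_nonneg x), coeFn_zero (β := ℝ)] with ω h h0
  rwa [h0] at h

theorem nrm_smul_apply (ξ : Ω →ₘ[P] ℝ) (x : X) :
    ∀ᵐ ω ∂P, M.nrm (M.smul ξ x) ω = |ξ ω| * M.nrm x ω := by
  filter_upwards [M.nrm_smul ξ x ▸ coeFn_mul |ξ| (M.nrm x), coeFn_abs ξ] with ω h habs
  rw [h, Pi.mul_apply, habs]

theorem nrm_zero : M.nrm 0 = 0 := by
  refine ext ?_
  filter_upwards [M.zero_smul 0 ▸ M.nrm_smul_apply 0 0, coeFn_zero (β := ℝ)] with ω h h0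
  rw [h, h0, Pi.zero_apply, abs_zero, zero_mul]

theorem nrm_rsmul_apply (c : ℝ) (x : X) :
    ∀ᵐ ω ∂P, M.nrm (M.rsmul c x) ω = |c| * M.nrm x ω := by
  filter_upwards [M.nrm_smul_apply (const Ω c) x, coeFn_const Ω c] with ω h hc
  rw [rsmul, h, hc, Function.const_apply]

theorem nrm_ae_eq_of_smul_eq {ξ : Ω →ₘ[P] ℝ} {x y : X} (h : M.smul ξ x = M.smul ξ y) :
    ∀ᵐ ω ∂P, ξ ω ≠ 0 → M.nrm x ω = M.nrm y ω := by
  filter_upwards [M.nrm_smul_apply ξ x, M.nrm_smul_apply ξ y] with ω hx hy hξ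
  rw [h, hy] at hx
  exact mul_left_cancel₀ (abs_ne_zero.mpr hξ) hx.symm

def glue {A : Set Ω} (hA : MeasurableSet A) (x y : X) : X :=
  M.smul (indicatorOne P hA) x + M.smul (indicatorOne P hA.compl) y

theorem nrm_glue_apply {A : Set Ω} (hA : MeasurableSet A) (x y : X) :
    ∀ᵐ ω ∂P, (ω ∈ A → M.nrm (M.glue hA x y) ω = M.nrm x ω) ∧
      (ω ∉ A → M.nrm (M.glue hA x y) ω = M.nrm y ω) := by
  have h_A : M.smul (indicatorOne P hA) (M.glue hA x y) = M.smul (indicatorOne P hA) x := by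
    simp only [glue, M.smul_add', ← M.mul_smul', indicatorOne_mul_indicatorOne, Set.inter_self,
      Set.inter_compl_self]
    rw [indicatorOne_empty, M.zero_smul, add_zero]
  have h_compl : M.smul (indicatorOne P hA.compl) (M.glue hA x y) =
      M.smul (indicatorOne P hA.compl) y := by
    simp only [glue, M.smul_add', ← M.mul_smul', indicatorOne_mul_indicatorOne, Set.inter_self,
      Set.compl_inter_self]
    rw [indicatorOne_empty, M.zero_smul, zero_add]
  filter_upwards [M.nrm_ae_eq_of_smul_eq h_A, M.nrm_ae_eq_of_smul_eq h_compl,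
    coeFn_indicatorOne hA, coeFn_indicatorOne hA.compl] with ω h h' e e'
  refine ⟨fun hω => h ?_, fun hω => h' ?_⟩
  · simp [e, hω]
  · simp [e', hω]

theorem tendstoRN_zero_of_ae_le {ι : Type*} {l : Filter ι} {u : ι → X} {r : ι → ℝ}
    (hr : Tendsto r l (𝓝 0)) (hu : ∀ i, ∀ᵐ ω ∂P, M.nrm (u i) ω ≤ r i) : M.TendstoRN u l 0 := by
  intro ε hε
  refine tendsto_const_nhds.congr' ?_
  filter_upwards [hr.eventually (gt_mem_nhds hε)] with i hi
  rw [sub_zero, eq_comm, measure_eq_zero_iff_ae_notMem]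
  exact (hu i).mono fun ω h hmem => (h.trans_lt hi).not_ge hmem

end

section

variable {Ω : Type*} [MeasurableSpace Ω] {P : Measure Ω} {X₁ X₂ : Type*}
  [AddCommGroup X₁] [AddCommGroup X₂] {M₁ : RNModuleStr P X₁} {M₂ : RNModuleStr P X₂}
  {T : X₁ → X₂}

theorem IsModuleHom.map_zero (hT : IsModuleHom M₁ M₂ T) : T 0 = 0 := by
  have h := hT.1 0 0
  rwa [add_zero, left_eq_add] at h

theorem IsModuleHom.map_sub (hT : IsModuleHom M₁ M₂ T) (x y : X₁) : T (x - y) = T x - T y := by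
  rw [eq_sub_iff_add_eq, ← hT.1, sub_add_cancel]

theorem TendstoRN.of_nrm_sub_le_mul [IsFiniteMeasure P] {ι : Type*} {l : Filter ι}
    {u : ι → X₁} {x : X₁} {v : ι → X₂} {y : X₂} {η : Ω →ₘ[P] ℝ} (hu : M₁.TendstoRN u l x)
    (h : ∀ i, M₂.nrm (v i - y) ≤ η * M₁.nrm (u i - x)) : M₂.TendstoRN v l y := by
  intro ε hε
  refine ENNReal.tendsto_nhds_zero.mpr fun δ hδ => ?_
  obtain ⟨K, hK⟩ := bddAboveInProbability_singleton η (δ / 2) (ENNReal.half_pos hδ.ne')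
  have hK_pos : 0 < max K 1 := lt_max_of_lt_right one_pos
  filter_upwards [ENNReal.tendsto_nhds_zero.mp (hu (ε / max K 1) (div_pos hε hK_pos)) (δ / 2)
    (ENNReal.half_pos hδ.ne')] with i hi
  calc P {ω | ε ≤ M₂.nrm (v i - y) ω}
      ≤ P ({ω | K < η ω} ∪ {ω | ε / max K 1 ≤ M₁.nrm (u i - x) ω}) := by
        refine measure_mono_ae ?_
        filter_upwards [coeFn_le.mpr (h i), coeFn_mul η (M₁.nrm (u i - x)),
          M₁.nrm_nonneg_apply (u i - x)] with ω hle hmul hnonneg hε_le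
        refine or_iff_not_imp_left.mpr fun hη => ?_
        rw [hmul, Pi.mul_apply] at hle
        show ε / max K 1 ≤ M₁.nrm (u i - x) ω
        rw [div_le_iff₀ hK_pos]
        calc ε ≤ η ω * M₁.nrm (u i - x) ω := hε_le.trans hle
          _ ≤ max K 1 * M₁.nrm (u i - x) ω :=
            mul_le_mul_of_nonneg_right ((not_lt.mp hη).trans (le_max_left K 1)) hnonneg
          _ = _ := mul_comm _ _
    _ ≤ δ / 2 + δ / 2 := (measure_union_le _ _).trans (add_le_add (hK η rfl) hi)
    _ = δ := ENNReal.add_halves δ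

theorem ASBounded.rnContinuousMap [IsFiniteMeasure P] (hb : ASBounded M₁ M₂ T)
    (hT : IsModuleHom M₁ M₂ T) : RNContinuousMap M₁ M₂ T := by
  obtain ⟨η, -, hη⟩ := hb
  exact fun u x hu => hu.of_nrm_sub_le_mul fun n => hT.map_sub (u n) x ▸ hη (u n - x)

theorem IsModuleHom.map_glue (hT : IsModuleHom M₁ M₂ T) {A : Set Ω} (hA : MeasurableSet A)
    (x y : X₁) : T (M₁.glue hA x y) = M₂.glue hA (T x) (T y) := by
  rw [glue, glue, hT.1, hT.2, hT.2]

theorem directedOn_nrm_image (hT : IsModuleHom M₁ M₂ T) (ρ : Ω →ₘ[P] ℝ) :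
    DirectedOn (· ≤ ·) ((fun z => M₂.nrm (T z)) '' {z | M₁.nrm z ≤ ρ}) := by
  rintro _ ⟨x, hx, rfl⟩ _ ⟨y, hy, rfl⟩
  let A := {ω | M₂.nrm (T y) ω ≤ M₂.nrm (T x) ω}
  have hA : MeasurableSet A := measurableSet_le (M₂.nrm (T y)).stronglyMeasurable.measurable
    (M₂.nrm (T x)).stronglyMeasurable.measurable
  have h_max : ∀ᵐ ω ∂P,
      M₂.nrm (T (M₁.glue hA x y)) ω = max (M₂.nrm (T x) ω) (M₂.nrm (T y) ω) := by
    filter_upwards [hT.map_glue hA x y ▸ M₂.nrm_glue_apply hA (T x) (T y)] with ω h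
    by_cases hω : ω ∈ A
    · rw [h.1 hω, max_eq_left hω]
    · rw [h.2 hω, max_eq_right (not_le.mp hω).le]
  refine ⟨_, ⟨M₁.glue hA x y, coeFn_le.mp ?_, rfl⟩, coeFn_le.mp ?_, coeFn_le.mp ?_⟩
  · filter_upwards [M₁.nrm_glue_apply hA x y, coeFn_le.mpr hx, coeFn_le.mpr hy] with ω h hx hy
    by_cases hω : ω ∈ A
    · exact (h.1 hω).trans_le hx
    · exact (h.2 hω).trans_le hy
  · filter_upwards [h_max] with ω h
    exact h ▸ le_max_left _ _
  · filter_upwards [h_max] with ω h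
    exact h ▸ le_max_right _ _

theorem RNContinuousMap.bddAboveInProbability_nrm_image (hc : RNContinuousMap M₁ M₂ T)
    (hT : IsModuleHom M₁ M₂ T) :
    BddAboveInProbability ((fun z => M₂.nrm (T z)) '' {z | M₁.nrm z ≤ 1}) := by
  intro δ hδ
  by_contra! h
  choose a ha haP using fun k : ℕ => h ((k : ℝ) + 1)
  choose z hz hza using ha
  have hzP (k : ℕ) : δ < P {ω | (k : ℝ) + 1 < M₂.nrm (T (z k)) ω} := by
    simpa only [← hza k] using haP k
  let c : ℕ → ℝ := fun k => 1 / ((k : ℝ) + 1)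
  have hc_pos (k : ℕ) : 0 < c k := by positivity
  let u : ℕ → X₁ := fun k => M₁.rsmul (c k) (z k)
  have hu : M₁.TendstoRN u atTop 0 := by
    refine M₁.tendstoRN_zero_of_ae_le tendsto_one_div_add_atTop_nhds_zero_nat fun k => ?_
    filter_upwards [M₁.nrm_rsmul_apply (c k) (z k), coeFn_le.mpr (hz k), coeFn_one (β := ℝ)]
      with ω h h_le h_one
    rw [h_one] at h_le
    rw [h, abs_of_pos (hc_pos k)]
    exact mul_le_of_le_one_right (hc_pos k).le h_le
  have h_far (k : ℕ) : δ ≤ P {ω | 1 ≤ M₂.nrm (T (u k) - T 0) ω} := by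
    refine (hzP k).le.trans (measure_mono_ae ?_)
    rw [hT.map_zero, sub_zero]
    filter_upwards [M₂.nrm_rsmul_apply (c k) (T (z k))] with ω h
      (hω : (k : ℝ) + 1 < M₂.nrm (T (z k)) ω)
    show 1 ≤ M₂.nrm (T (u k)) ω
    rw [show T (u k) = M₂.rsmul (c k) (T (z k)) from hT.2 _ _, h, abs_of_pos (hc_pos k)]
    exact (one_div_mul_cancel (by positivity)).symm.le.trans
      (mul_le_mul_of_nonneg_left hω.le (hc_pos k).le)
  exact hδ.ne' (le_antisymm (ge_of_tendsto' (hc u 0 hu 1 one_pos) h_far) bot_le)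

theorem nrm_map_le_mul_add_of_forall_nrm_le_one (hT : IsModuleHom M₁ M₂ T)
    {η : Ω →ₘ[P] ℝ} (h : ∀ z, M₁.nrm z ≤ 1 → M₂.nrm (T z) ≤ η) (x : X₁) {ε : ℝ} (hε : 0 < ε) :
    ∀ᵐ ω ∂P, M₂.nrm (T x) ω ≤ η ω * (M₁.nrm x ω + ε) := by
  have hξ_meas : Measurable fun ω => (M₁.nrm x ω + ε)⁻¹ :=
    ((M₁.nrm x).stronglyMeasurable.measurable.add_const ε).inv
  let ξ : Ω →ₘ[P] ℝ := AEEqFun.mk _ hξ_meas.aestronglyMeasurable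
  have hξ : ⇑ξ =ᵐ[P] _ := AEEqFun.coeFn_mk _ hξ_meas.aestronglyMeasurable
  have hξx : M₁.nrm (M₁.smul ξ x) ≤ 1 := by
    refine coeFn_le.mp ?_
    filter_upwards [M₁.nrm_smul_apply ξ x, hξ, M₁.nrm_nonneg_apply x, coeFn_one (β := ℝ)]
      with ω h_smul hξω h_nonneg h_one
    rw [h_smul, hξω, h_one, Pi.one_apply, abs_of_pos (by positivity),
      inv_mul_le_one₀ (by positivity)]
    linarith
  filter_upwards [coeFn_le.mpr (h _ hξx), M₂.nrm_smul_apply ξ (T x), hξ, M₁.nrm_nonneg_apply x]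
    with ω h_le h_smul hξω h_nonneg
  rw [hT.2, h_smul, hξω, abs_of_pos (by positivity), inv_mul_le_iff₀ (by positivity)] at h_le
  linarith

theorem asBounded_of_forall_nrm_le_one (hT : IsModuleHom M₁ M₂ T) {η : Ω →ₘ[P] ℝ}
    (h : ∀ z, M₁.nrm z ≤ 1 → M₂.nrm (T z) ≤ η) : ASBounded M₁ M₂ T := by
  have h_zero_le_one : (0 : Ω →ₘ[P] ℝ) ≤ 1 := by
    refine coeFn_le.mp ?_
    filter_upwards [coeFn_zero (β := ℝ), coeFn_one (β := ℝ)] with ω h0 h1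
    rw [h0, h1]
    exact zero_le_one
  have hη := h 0 (M₁.nrm_zero ▸ h_zero_le_one)
  rw [hT.map_zero, M₂.nrm_zero] at hη
  refine ⟨η, hη, fun x => coeFn_le.mp ?_⟩
  filter_upwards [ae_all_iff.mpr fun n : ℕ => nrm_map_le_mul_add_of_forall_nrm_le_one hT h x
    (Nat.one_div_pos_of_nat (n := n)), coeFn_mul η (M₁.nrm x)] with ω h_le hmul
  rw [hmul, Pi.mul_apply]
  have h_lim : Tendsto (fun n : ℕ => η ω * (M₁.nrm x ω + 1 / ((n : ℝ) + 1))) atTop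
      (𝓝 (η ω * M₁.nrm x ω)) := by
    simpa using (tendsto_one_div_add_atTop_nhds_zero_nat.const_add (M₁.nrm x ω)).const_mul (η ω)
  exact ge_of_tendsto' h_lim h_le

end

end RNModuleStr

/-- a linear operator (module homomorphism) `T : X₁ → X₂` between RN
modules is a.s. bounded iff it is continuous for the `(ε,λ)`-topologies
(sequential continuity, equivalent by metrizability). -/
theorem stmt1 {Ω : Type*} [MeasurableSpace Ω] (P : Measure Ω) [IsProbabilityMeasure P]
    {X₁ X₂ : Type*} [AddCommGroup X₁] [AddCommGroup X₂]
    (M₁ : RNModuleStr P X₁) (M₂ : RNModuleStr P X₂)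
    (T : X₁ → X₂) (hT : IsModuleHom M₁ M₂ T) :
    ASBounded M₁ M₂ T ↔ RNContinuousMap M₁ M₂ T := by
  refine ⟨fun hb => hb.rnContinuousMap hT, fun hc => ?_⟩
  obtain ⟨η, hη⟩ := AEEqFun.bddAbove_of_directedOn_of_bddAboveInProbability
    (directedOn_nrm_image hT 1) (hc.bddAboveInProbability_nrm_image hT)
  exact asBounded_of_forall_nrm_le_one hT fun z hz => hη ⟨z, hz, rfl⟩
end
end

section
/- Let X₁, X₂ be RN modules and T ∈ B(X₁,X₂) an almost surely bounded linear operator. Then the operator L⁰-norm ‖T‖ := ⋀{η ∈ L⁰₊(F) : ‖Tz‖₂ ≤ η‖z‖₁ for all z ∈ X₁} satisfies ‖T‖ = ⋁{‖Tx‖₂ : x ∈ X₁, ‖x‖₁ ≤ 1}, where 1 is the unit element of L⁰(F,ℝ). -/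
/-!
For every `x`, the element `‖x‖⁻¹ • x` (with `0⁻¹ = 0`) lies in the unit ball, so an upper bound
`g` of `{‖T y‖ : ‖y‖ ≤ 1}` satisfies `‖x‖⁻¹ ‖T x‖ ≤ g`, i.e. `‖T x‖ ≤ g ‖x‖` off the set
`A = {‖x‖ = 0}`. On `A` itself `‖T x‖` vanishes because `T` is `L⁰`-linear: `1_A • x` has norm
zero, hence is `0`, and so is `T (1_A • x) = 1_A • T x`. Conversely every `η ≥ 0` with
`‖T z‖ ≤ η ‖z‖` bounds the norms on the unit ball. So the upper bounds of
`{‖T y‖ : ‖y‖ ≤ 1}` are exactly the `η` defining the operator norm, and the greatest lower bound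
of the upper bounds of a set is its least upper bound.
-/

open MeasureTheory Filter Set
noncomputable section

open RNModuleStr

namespace MeasureTheory.AEEqFun

variable {Ω : Type*} [MeasurableSpace Ω] {P : Measure Ω}

/-- The generalized inverse of `L⁰`, which is `0` on `{f = 0}`. -/
def inv₀ (f : Ω →ₘ[P] ℝ) : Ω →ₘ[P] ℝ :=
  f.compMeasurable (·⁻¹) measurable_inv

def zeroSetIndicator (f : Ω →ₘ[P] ℝ) : Ω →ₘ[P] ℝ :=
  f.compMeasurable (({0} : Set ℝ).indicator 1)
    (measurable_one.indicator (measurableSet_singleton (0 : ℝ)))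

theorem coeFn_inv₀ (f : Ω →ₘ[P] ℝ) : ⇑(inv₀ f) =ᵐ[P] fun ω => (f ω)⁻¹ :=
  coeFn_compMeasurable _ _ f

theorem coeFn_zeroSetIndicator (f : Ω →ₘ[P] ℝ) :
    ⇑(zeroSetIndicator f) =ᵐ[P] fun ω => ({0} : Set ℝ).indicator 1 (f ω) :=
  coeFn_compMeasurable _ _ f

theorem abs_zero_mul (f : Ω →ₘ[P] ℝ) : |(0 : Ω →ₘ[P] ℝ)| * f = 0 := by
  refine AEEqFun.ext ?_
  filter_upwards [coeFn_mul |(0 : Ω →ₘ[P] ℝ)| f, coeFn_abs (0 : Ω →ₘ[P] ℝ),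
    coeFn_zero (β := ℝ) (μ := P)] with ω hmul habs hzero
  simp [hmul, habs, hzero]

theorem zero_le_one : (0 : Ω →ₘ[P] ℝ) ≤ 1 := by
  rw [← coeFn_le]
  filter_upwards [coeFn_zero (β := ℝ) (μ := P), coeFn_one (β := ℝ) (μ := P)] with ω h0 h1
  simp [h0, h1]

theorem mul_le_of_le_one_right {η f : Ω →ₘ[P] ℝ} (hη : 0 ≤ η) (hf : f ≤ 1) : η * f ≤ η := by
  rw [← coeFn_le] at hη hf ⊢
  filter_upwards [hη, hf, coeFn_mul η f, coeFn_zero (β := ℝ) (μ := P),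
    coeFn_one (β := ℝ) (μ := P)] with ω hη hf hmul h0 h1
  simp only [hmul, Pi.mul_apply, h0, h1, Pi.zero_apply, Pi.one_apply] at hη hf ⊢
  exact _root_.mul_le_of_le_one_right hη hf

theorem abs_inv₀_mul_le_one (f : Ω →ₘ[P] ℝ) : |inv₀ f| * f ≤ 1 := by
  rw [← coeFn_le]
  filter_upwards [coeFn_mul |inv₀ f| f, coeFn_abs (inv₀ f), coeFn_inv₀ f,
    coeFn_one (β := ℝ) (μ := P)] with ω hmul habs hinv h1
  simp only [hmul, Pi.mul_apply, habs, hinv, h1, Pi.one_apply]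
  rcases eq_or_ne (f ω) 0 with h | h
  · simp [h]
  · calc |(f ω)⁻¹| * f ω ≤ |(f ω)⁻¹| * |f ω| := by gcongr; exact le_abs_self _
      _ = 1 := by rw [← abs_mul, inv_mul_cancel₀ h, abs_one]

theorem abs_zeroSetIndicator_mul (f : Ω →ₘ[P] ℝ) : |zeroSetIndicator f| * f = 0 := by
  refine AEEqFun.ext ?_
  filter_upwards [coeFn_mul |zeroSetIndicator f| f, coeFn_abs (zeroSetIndicator f),
    coeFn_zeroSetIndicator f, coeFn_zero (β := ℝ) (μ := P)] with ω hmul habs hind h0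
  simp only [hmul, Pi.mul_apply, habs, hind, h0, Pi.zero_apply]
  by_cases h : f ω = 0 <;> simp [h]

/-- Division by `t` in `L⁰`: the set `{t = 0}`, where `inv₀ t` carries no information, is
controlled by `zeroSetIndicator t`. -/
theorem le_mul_of_abs_inv₀_mul_le {t u g : Ω →ₘ[P] ℝ} (ht : 0 ≤ t) (h : |inv₀ t| * u ≤ g)
    (h₀ : |zeroSetIndicator t| * u = 0) : u ≤ g * t := by
  rw [← coeFn_le] at ht h ⊢
  filter_upwards [ht, h, h₀ ▸ coeFn_mul |zeroSetIndicator t| u, coeFn_mul |inv₀ t| u,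
    coeFn_mul g t, coeFn_abs (inv₀ t), coeFn_abs (zeroSetIndicator t), coeFn_inv₀ t,
    coeFn_zeroSetIndicator t, coeFn_zero (β := ℝ) (μ := P)]
    with ω ht h h₀ hmul hmul' habs habs' hinv hind h0
  simp only [hmul, hmul', habs, habs', hinv, hind, h0, Pi.mul_apply, Pi.zero_apply] at ht h h₀ ⊢
  rcases ht.eq_or_lt with ht | ht
  · have hu : u ω = 0 := by simpa [← ht] using h₀.symm
    simp [← ht, hu]
  · calc u ω = t ω * (|(t ω)⁻¹| * u ω) := by
          rw [abs_of_pos (inv_pos.mpr ht), mul_inv_cancel_left₀ ht.ne']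
      _ ≤ t ω * g ω := by gcongr
      _ = g ω * t ω := mul_comm _ _

end MeasureTheory.AEEqFun

namespace RNModuleStr

variable {Ω : Type*} [MeasurableSpace Ω] {P : Measure Ω} {X Y : Type*} [AddCommGroup X]
  [AddCommGroup Y]

theorem smul_zero (M : RNModuleStr P X) (ξ : Ω →ₘ[P] ℝ) : M.smul ξ 0 = 0 := by
  simpa using M.smul_add' ξ 0 0

@[simp]
theorem nrm_zero_s2 (M : RNModuleStr P X) : M.nrm 0 = 0 := by
  simpa [M.smul_zero, AEEqFun.abs_zero_mul] using M.nrm_smul 0 0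

theorem IsModuleHom.map_zero_s2 {M : RNModuleStr P X} {N : RNModuleStr P Y} {T : X → Y}
    (hT : IsModuleHom M N T) : T 0 = 0 := by
  simpa using hT.1 0 0

/-- `L⁰`-linear maps are local: `T x` vanishes wherever `x` does. -/
theorem IsModuleHom.abs_mul_nrm_map_eq_zero {M : RNModuleStr P X} {N : RNModuleStr P Y}
    {T : X → Y} (hT : IsModuleHom M N T) {ξ : Ω →ₘ[P] ℝ} {x : X} (h : |ξ| * M.nrm x = 0) :
    |ξ| * N.nrm (T x) = 0 := by
  have hξx : M.smul ξ x = 0 := M.nrm_eq_zero _ (by rw [M.nrm_smul, h])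
  rw [← N.nrm_smul, ← hT.2, hξx, hT.map_zero_s2, N.nrm_zero_s2]

/-- The operator norm `‖T‖` is the infimum of this set. -/
def opNormBounds (M : RNModuleStr P X) (N : RNModuleStr P Y) (T : X → Y) :
    Set (Ω →ₘ[P] ℝ) :=
  {η | 0 ≤ η ∧ ∀ x, N.nrm (T x) ≤ η * M.nrm x}

def normsOnUnitBall (M : RNModuleStr P X) (N : RNModuleStr P Y) (T : X → Y) :
    Set (Ω →ₘ[P] ℝ) :=
  {g | ∃ x, M.nrm x ≤ 1 ∧ g = N.nrm (T x)}

theorem opNormBounds_subset_upperBounds (M : RNModuleStr P X) (N : RNModuleStr P Y)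
    (T : X → Y) : opNormBounds M N T ⊆ upperBounds (normsOnUnitBall M N T) := by
  rintro η ⟨hη, hηT⟩ _ ⟨x, hx, rfl⟩
  exact (hηT x).trans (AEEqFun.mul_le_of_le_one_right hη hx)

theorem IsModuleHom.upperBounds_normsOnUnitBall_subset {M : RNModuleStr P X}
    {N : RNModuleStr P Y} {T : X → Y} (hT : IsModuleHom M N T) :
    upperBounds (normsOnUnitBall M N T) ⊆ opNormBounds M N T := by
  intro g hg
  refine ⟨?_, fun x => ?_⟩
  · have h0 : N.nrm (T 0) ≤ g := hg ⟨0, by simpa using AEEqFun.zero_le_one, rfl⟩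
    exact (N.nrm_nonneg _).trans h0
  · have hnormalized : N.nrm (T (M.smul (AEEqFun.inv₀ (M.nrm x)) x)) ≤ g := by
      refine hg ⟨_, ?_, rfl⟩
      rw [M.nrm_smul]
      exact AEEqFun.abs_inv₀_mul_le_one _
    rw [hT.2, N.nrm_smul] at hnormalized
    exact AEEqFun.le_mul_of_abs_inv₀_mul_le (M.nrm_nonneg x) hnormalized
      (hT.abs_mul_nrm_map_eq_zero (AEEqFun.abs_zeroSetIndicator_mul _))

theorem IsModuleHom.upperBounds_normsOnUnitBall {M : RNModuleStr P X} {N : RNModuleStr P Y}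
    {T : X → Y} (hT : IsModuleHom M N T) :
    upperBounds (normsOnUnitBall M N T) = opNormBounds M N T :=
  hT.upperBounds_normsOnUnitBall_subset.antisymm (opNormBounds_subset_upperBounds M N T)

end RNModuleStr

theorem stmt2_general {Ω : Type*} [MeasurableSpace Ω] (P : Measure Ω)
    {X₁ X₂ : Type*} [AddCommGroup X₁] [AddCommGroup X₂]
    (M₁ : RNModuleStr P X₁) (M₂ : RNModuleStr P X₂)
    (T : X₁ → X₂) (hT : IsModuleHom M₁ M₂ T)
    (Nrm : Ω →ₘ[P] ℝ)
    (hglb : IsGLB {η : Ω →ₘ[P] ℝ | 0 ≤ η ∧ ∀ x : X₁, M₂.nrm (T x) ≤ η * M₁.nrm x} Nrm) :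
    IsLUB {g : Ω →ₘ[P] ℝ | ∃ x : X₁, M₁.nrm x ≤ 1 ∧ g = M₂.nrm (T x)} Nrm := by
  change IsGLB (opNormBounds M₁ M₂ T) Nrm at hglb
  rwa [← hT.upperBounds_normsOnUnitBall, isGLB_upperBounds] at hglb

/-- for an a.s. bounded module homomorphism `T`, the operator
`L⁰`-norm `‖T‖ = ⋀{η ∈ L⁰₊ : ‖Tz‖₂ ≤ η‖z‖₁ ∀z}` satisfies
`‖T‖ = ⋁{‖Tx‖₂ : ‖x‖₁ ≤ 1}`. -/
theorem stmt2 {Ω : Type*} [MeasurableSpace Ω] (P : Measure Ω) [IsProbabilityMeasure P]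
    {X₁ X₂ : Type*} [AddCommGroup X₁] [AddCommGroup X₂]
    (M₁ : RNModuleStr P X₁) (M₂ : RNModuleStr P X₂)
    (T : X₁ → X₂) (hT : IsModuleHom M₁ M₂ T) (hTb : ASBounded M₁ M₂ T)
    (Nrm : Ω →ₘ[P] ℝ)
    (hglb : IsGLB {η : Ω →ₘ[P] ℝ | 0 ≤ η ∧ ∀ x : X₁, M₂.nrm (T x) ≤ η * M₁.nrm x} Nrm) :
    IsLUB {g : Ω →ₘ[P] ℝ | ∃ x : X₁, M₁.nrm x ≤ 1 ∧ g = M₂.nrm (T x)} Nrm :=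
  stmt2_general P M₁ M₂ T hT Nrm hglb
end
end

section
/- Let f : [s,t] → L⁰(F,ℝ) be continuous (in the topology of convergence in probability) with ⋁_{u∈[s,t]} |f(u)| ∈ L¹(F,ℝ). Then ∫_Ω [∫_s^t f(u) du] dP = ∫_s^t [∫_Ω f(u) dP] du, where the inner integral ∫_s^t f(u) du is the Riemann integral in the complete RN module L⁰(F,ℝ). -/
/-!
Every `f u` is dominated by `g`, hence every uniform Riemann sum by `(t - s) • g`. Dominated
convergence survives convergence in probability (pass to a.e. convergent subsequences), so
`u ↦ ∫ f u dP` is continuous on `[s, t]`, and the integrals of the Riemann sums converge both to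
`∫ I dP` and, being the Riemann sums of `u ↦ ∫ f u dP`, to its integral over `[s, t]`.
-/

open MeasureTheory Filter Set Topology

noncomputable section

def leftRiemannSum {M : Type*} [AddCommMonoid M] [Module ℝ M] (F : ℝ → M) (s t : ℝ) (n : ℕ) : M :=
  ∑ i ∈ Finset.range n, ((t - s) / n) • F (s + (t - s) * i / n)

theorem add_sub_mul_div_mem_Icc {s t : ℝ} (hst : s ≤ t) {k n : ℕ} (hk : k ≤ n) :
    s + (t - s) * k / n ∈ Icc s t := by
  have h0 : 0 ≤ (k : ℝ) / n := by positivity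
  have h1 : (k : ℝ) / n ≤ 1 := div_le_one_of_le₀ (by exact_mod_cast hk) n.cast_nonneg
  rw [mul_div_assoc]
  constructor <;> nlinarith

section RiemannSum

open Finset

variable {E : Type*} [NormedAddCommGroup E] [NormedSpace ℝ E]

theorem norm_leftRiemannSum_le {F : ℝ → E} {s t C : ℝ} {n : ℕ} (hst : s ≤ t) (hC : 0 ≤ C)
    (hF : ∀ i ∈ range n, ‖F (s + (t - s) * i / n)‖ ≤ C) :
    ‖leftRiemannSum F s t n‖ ≤ (t - s) * C := by
  have hstep : 0 ≤ (t - s) / n := div_nonneg (sub_nonneg.2 hst) n.cast_nonneg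
  calc ‖leftRiemannSum F s t n‖ ≤ ∑ _i ∈ range n, (t - s) / n * C :=
        norm_sum_le_of_le _ fun i hi => by
          rw [norm_smul, Real.norm_of_nonneg hstep]
          exact mul_le_mul_of_nonneg_left (hF i hi) hstep
    _ ≤ (t - s) * C := by
        rw [sum_const, card_range, nsmul_eq_mul]
        rcases n.eq_zero_or_pos with rfl | hn
        · simpa using mul_nonneg (sub_nonneg.2 hst) hC
        · field_simp; rfl

variable [CompleteSpace E]

theorem norm_smul_sub_intervalIntegral_le {F : ℝ → E} {a b C : ℝ} (hab : a ≤ b)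
    (hF : IntervalIntegrable F volume a b) (hC : ∀ x ∈ Ioc a b, ‖F a - F x‖ ≤ C) :
    ‖(b - a) • F a - ∫ x in a..b, F x‖ ≤ C * (b - a) := by
  rw [← intervalIntegral.integral_const,
    ← intervalIntegral.integral_sub intervalIntegrable_const hF]
  have h := intervalIntegral.norm_integral_le_of_norm_le_const (by rwa [uIoc_of_le hab])
  rwa [abs_of_nonneg (sub_nonneg.2 hab)] at h

theorem norm_leftRiemannSum_sub_integral_le {F : ℝ → E} {s t C : ℝ} {n : ℕ} (hn : n ≠ 0)
    (hst : s ≤ t) (hF : ContinuousOn F (Icc s t))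
    (hC : ∀ x ∈ Icc s t, ∀ y ∈ Icc s t, |x - y| ≤ (t - s) / n → ‖F x - F y‖ ≤ C) :
    ‖leftRiemannSum F s t n - ∫ u in s..t, F u‖ ≤ C * (t - s) := by
  set a : ℕ → ℝ := fun k => s + (t - s) * k / n with ha
  have hstep : ∀ k, a (k + 1) - a k = (t - s) / n := fun k => by simp only [ha]; push_cast; ring
  have hmono : ∀ k, a k ≤ a (k + 1) := fun k => by
    linarith [hstep k, div_nonneg (sub_nonneg.2 hst) n.cast_nonneg]
  have hmem : ∀ k ≤ n, a k ∈ Icc s t := fun k hk => add_sub_mul_div_mem_Icc hst hk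
  have hcell : ∀ k < n, Icc (a k) (a (k + 1)) ⊆ Icc s t := fun k hk =>
    Icc_subset_Icc (hmem k hk.le).1 (hmem (k + 1) hk).2
  have hint : ∀ k < n, IntervalIntegrable F volume (a k) (a (k + 1)) := fun k hk =>
    (hF.mono (hcell k hk)).intervalIntegrable_of_Icc (hmono k)
  have hends : a 0 = s ∧ a n = t := by simp [ha, hn]
  calc ‖leftRiemannSum F s t n - ∫ u in s..t, F u‖
      = ‖∑ k ∈ range n, ((a (k + 1) - a k) • F (a k) - ∫ u in a k..a (k + 1), F u)‖ := by
        rw [sum_sub_distrib, intervalIntegral.sum_integral_adjacent_intervals hint, hends.1,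
          hends.2]
        simp only [hstep]
        rfl
    _ ≤ ∑ k ∈ range n, C * (a (k + 1) - a k) := norm_sum_le_of_le _ fun k hk => by
        have hk := mem_range.1 hk
        refine norm_smul_sub_intervalIntegral_le (hmono k) (hint k hk) fun x hx => ?_
        refine hC _ (hmem k hk.le) _ (hcell k hk (Ioc_subset_Icc_self hx)) ?_
        rw [abs_sub_comm, abs_of_nonneg (by linarith [hx.1]), ← hstep k]
        linarith [hx.2]
    _ = C * (t - s) := by rw [← mul_sum, sum_range_sub a, hends.1, hends.2]

theorem ContinuousOn.tendsto_leftRiemannSum {F : ℝ → E} {s t : ℝ} (hst : s ≤ t)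
    (hF : ContinuousOn F (Icc s t)) :
    Tendsto (leftRiemannSum F s t) atTop (𝓝 (∫ u in s..t, F u)) := by
  rcases hst.eq_or_lt with rfl | hlt
  · exact tendsto_const_nhds.congr fun n => by simp [leftRiemannSum]
  have hT : 0 < t - s := sub_pos.2 hlt
  refine Metric.tendsto_atTop.2 fun ε hε => ?_
  obtain ⟨δ, hδ, hFδ⟩ := Metric.uniformContinuousOn_iff_le.1
    (isCompact_Icc.uniformContinuousOn_of_continuous hF) (ε / (2 * (t - s))) (by positivity)
  obtain ⟨N, hN⟩ := exists_nat_gt ((t - s) / δ)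
  refine ⟨N + 1, fun n hn => ?_⟩
  have hn0 : 0 < n := N.succ_pos.trans_le hn
  have hmesh : (t - s) / n ≤ δ := by
    rw [div_le_iff₀ (by exact_mod_cast hn0), ← div_le_iff₀' hδ]
    exact hN.le.trans (by exact_mod_cast N.le_succ.trans hn)
  rw [dist_eq_norm]
  calc ‖leftRiemannSum F s t n - ∫ u in s..t, F u‖ ≤ ε / (2 * (t - s)) * (t - s) :=
        norm_leftRiemannSum_sub_integral_le hn0.ne' hst hF fun x hx y hy hxy =>
          dist_eq_norm (F x) (F y) ▸ hFδ x hx y hy (hxy.trans hmesh)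
    _ < ε := by field_simp; linarith

end RiemannSum

theorem MeasureTheory.TendstoInMeasure.tendsto_integral_of_dominated {α E ι : Type*}
    [MeasurableSpace α] {μ : Measure α} [NormedAddCommGroup E] [NormedSpace ℝ E]
    [CompleteSpace E] {l : Filter ι} [l.IsCountablyGenerated] {F : ι → α → E} {f : α → E}
    {bound : α → ℝ} (h : TendstoInMeasure μ F l f)
    (hF_meas : ∀ᶠ i in l, AEStronglyMeasurable (F i) μ) (hbound : Integrable bound μ)
    (h_le : ∀ᶠ i in l, ∀ᵐ ω ∂μ, ‖F i ω‖ ≤ bound ω) :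
    Tendsto (fun i => ∫ ω, F i ω ∂μ) l (𝓝 (∫ ω, f ω ∂μ)) := by
  refine tendsto_iff_seq_tendsto.2 fun x hx => tendsto_of_subseq_tendsto fun ns hns => ?_
  have hxns := hx.comp hns
  obtain ⟨ms, hms, hae⟩ := (h.comp hxns).exists_seq_tendsto_ae
  have hsub := hxns.comp hms.tendsto_atTop
  exact ⟨ms, tendsto_integral_filter_of_dominated_convergence bound (hsub.eventually hF_meas)
    (hsub.eventually h_le) hbound hae⟩

namespace MeasureTheory.AEEqFun

open Finset

variable {α : Type*} [MeasurableSpace α] {μ : Measure α}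

theorem tendstoInMeasure_iff_measure_abs_sub {ι : Type*} {l : Filter ι} {F : ι → α →ₘ[μ] ℝ}
    {G : α →ₘ[μ] ℝ} : TendstoInMeasure μ (fun i => ⇑(F i)) l G ↔
      ∀ ε : ℝ, 0 < ε → Tendsto (fun i => μ {ω | ε ≤ |F i - G| ω}) l (𝓝 0) := by
  have hsets : ∀ i ε, μ {ω | ε ≤ |F i - G| ω} = μ {ω | ε ≤ dist (F i ω) (G ω)} :=
    fun i ε => measure_congr <| eventuallyEq_set.2 <| by
      filter_upwards [coeFn_abs (F i - G), coeFn_sub (F i) G] with ω habs hsub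
      rw [habs, hsub, Pi.sub_apply, Real.dist_eq]
  simp only [tendstoInMeasure_iff_dist, hsets]

theorem ae_norm_le_of_abs_le {f g : α →ₘ[μ] ℝ} (h : |f| ≤ g) : ∀ᵐ ω ∂μ, ‖f ω‖ ≤ g ω := by
  filter_upwards [coeFn_le.2 h, coeFn_abs f] with ω hle habs
  rwa [habs] at hle

variable {E : Type*} [NormedAddCommGroup E] [NormedSpace ℝ E]

theorem coeFn_leftRiemannSum (f : ℝ → α →ₘ[μ] E) (s t : ℝ) (n : ℕ) :
    ⇑(leftRiemannSum f s t n) =ᵐ[μ] fun ω => leftRiemannSum (fun u => f u ω) s t n := by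
  filter_upwards [coeFn_fun_finsetSum (range n) fun i => ((t - s) / n) • f (s + (t - s) * i / n),
    ae_all_iff.2 fun i : ℕ => coeFn_smul ((t - s) / n) (f (s + (t - s) * i / n))]
    with ω hsum hsmul
  simp only [leftRiemannSum, hsum, hsmul, Pi.smul_apply]

theorem ae_norm_leftRiemannSum_le {f : ℝ → α →ₘ[μ] E} {g : α → ℝ} {s t : ℝ} (hst : s ≤ t)
    (hfg : ∀ u ∈ Icc s t, ∀ᵐ ω ∂μ, ‖f u ω‖ ≤ g ω) (n : ℕ) :
    ∀ᵐ ω ∂μ, ‖leftRiemannSum f s t n ω‖ ≤ (t - s) * g ω := by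
  have hnodes : ∀ᵐ ω ∂μ, ∀ i ∈ range n, ‖f (s + (t - s) * i / n) ω‖ ≤ g ω :=
    (eventually_all_finset _).2 fun i hi =>
      hfg _ (add_sub_mul_div_mem_Icc hst (mem_range.1 hi).le)
  filter_upwards [coeFn_leftRiemannSum f s t n, hnodes, hfg s (left_mem_Icc.2 hst)]
    with ω hsum hnodes hs
  rw [hsum]
  exact norm_leftRiemannSum_le hst ((norm_nonneg _).trans hs) hnodes

theorem integral_leftRiemannSum [CompleteSpace E] {f : ℝ → α →ₘ[μ] E} {s t : ℝ} (hst : s ≤ t)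
    (hf : ∀ u ∈ Icc s t, MeasureTheory.Integrable (f u) μ) (n : ℕ) :
    ∫ ω, leftRiemannSum f s t n ω ∂μ = leftRiemannSum (fun u => ∫ ω, f u ω ∂μ) s t n := by
  rw [integral_congr_ae (coeFn_leftRiemannSum f s t n)]
  simp only [leftRiemannSum]
  rw [integral_finsetSum (f := fun (i : ℕ) ω => ((t - s) / n) • f (s + (t - s) * i / n) ω) _
    fun i hi => (hf _ (add_sub_mul_div_mem_Icc hst (mem_range.1 hi).le)).smul _]
  simp only [integral_smul]

end MeasureTheory.AEEqFun

theorem stmt18_general {Ω : Type*} [MeasurableSpace Ω] (P : Measure Ω)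
    (s t : ℝ) (hst : s ≤ t) (f : ℝ → (Ω →ₘ[P] ℝ))
    (hcont : ∀ u ∈ Icc s t, ∀ ε : ℝ, 0 < ε →
      Tendsto (fun v => P {ω : Ω | ε ≤ |f v - f u| ω}) (nhdsWithin u (Icc s t)) (nhds 0))
    (g : Ω →ₘ[P] ℝ)
    (hg : IsLUB {h : Ω →ₘ[P] ℝ | ∃ u ∈ Icc s t, h = |f u|} g)
    (hgint : Integrable (g : Ω → ℝ) P)
    (I : Ω →ₘ[P] ℝ)
    (hI : ∀ ε : ℝ, 0 < ε → Tendsto (fun n : ℕ =>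
        P {ω : Ω | ε ≤ |(∑ i ∈ Finset.range n, ((t - s) / n) • f (s + (t - s) * i / n)) - I| ω})
      atTop (nhds 0)) :
    ∫ ω, I ω ∂P = ∫ u in s..t, (∫ ω, f u ω ∂P) := by
  have hfg : ∀ u ∈ Icc s t, ∀ᵐ ω ∂P, ‖f u ω‖ ≤ g ω := fun u hu =>
    AEEqFun.ae_norm_le_of_abs_le (hg.1 ⟨u, hu, rfl⟩)
  have hfint : ∀ u ∈ Icc s t, Integrable (f u) P := fun u hu =>
    hgint.mono' (f u).aestronglyMeasurable (hfg u hu)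
  have hmean : ContinuousOn (fun u => ∫ ω, f u ω ∂P) (Icc s t) := fun u hu =>
    (AEEqFun.tendstoInMeasure_iff_measure_abs_sub.2 (hcont u hu)).tendsto_integral_of_dominated
      (.of_forall fun v => (f v).aestronglyMeasurable) hgint
      (eventually_mem_nhdsWithin.mono hfg)
  have hsums : Tendsto (fun n => ∫ ω, leftRiemannSum f s t n ω ∂P) atTop (𝓝 (∫ ω, I ω ∂P)) :=
    ((AEEqFun.tendstoInMeasure_iff_measure_abs_sub (F := leftRiemannSum f s t)).2
      hI).tendsto_integral_of_dominated
        (.of_forall fun n => (leftRiemannSum f s t n).aestronglyMeasurable)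
        (hgint.const_mul (t - s)) (.of_forall (AEEqFun.ae_norm_leftRiemannSum_le hst hfg))
  simp only [AEEqFun.integral_leftRiemannSum hst hfint] at hsums
  exact tendsto_nhds_unique hsums (hmean.tendsto_leftRiemannSum hst)

/-- if `f : [s,t] → L⁰(F,ℝ)` is continuous in probability and
`⋁_{u∈[s,t]} |f(u)| ∈ L¹(F,ℝ)`, then
`∫_Ω [∫_s^t f(u) du] dP = ∫_s^t [∫_Ω f(u) dP] du`, where `∫_s^t f(u) du` is the
Riemann integral in the complete RN module `L⁰(F,ℝ)` (the limit in probability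
`I` of the uniform Riemann sums). -/
theorem stmt18 {Ω : Type*} [MeasurableSpace Ω] (P : Measure Ω) [IsProbabilityMeasure P]
    (s t : ℝ) (hst : s ≤ t) (f : ℝ → (Ω →ₘ[P] ℝ))
    (hcont : ∀ u ∈ Icc s t, ∀ ε : ℝ, 0 < ε →
      Tendsto (fun v => P {ω : Ω | ε ≤ |f v - f u| ω}) (nhdsWithin u (Icc s t)) (nhds 0))
    (g : Ω →ₘ[P] ℝ)
    (hg : IsLUB {h : Ω →ₘ[P] ℝ | ∃ u ∈ Icc s t, h = |f u|} g)
    (hgint : Integrable (g : Ω → ℝ) P)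
    (I : Ω →ₘ[P] ℝ)
    (hI : ∀ ε : ℝ, 0 < ε → Tendsto (fun n : ℕ =>
        P {ω : Ω | ε ≤ |(∑ i ∈ Finset.range n, ((t - s) / n) • f (s + (t - s) * i / n)) - I| ω})
      atTop (nhds 0)) :
    ∫ ω, I ω ∂P = ∫ u in s..t, (∫ ω, f u ω ∂P) :=
  stmt18_general P s t hst f hcont g hg hgint I hI
end
end
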